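/- Let C be a circuit all of whose channels are constant-delay channels, with a single input port and a single output port. For every t ∈ ℝ there exists ε > 0 such that DG(t) = DG(t + ε') for all 0 ≤ ε' ≤ ε. -/

import Mathlib

/-- A circuit all of whose channels are constant-delay channels: edge `k` into vertex
`v` has delay `delay v k > 0` and initial value `init v k`. -/
structure CDCircuit where
  V : Type
  [instFintype : Fintype V]
  [instDecEq : DecidableEq V]
  inp : V → Prop
  out : V → Prop
  preds : V → List V
  gate : V → List Bool → Bool
  delay : V → ℕ → ℝ
  init : V → ℕ → Bool
  delay_pos : ∀ v k, 0 < delay v k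
  inp_preds : ∀ v, inp v → preds v = []
  out_preds : ∀ v, out v → (preds v).length = 1
  out_gate : ∀ v, out v → ∀ l : List Bool, gate v l = l.headI
  inp_not_out : ∀ v, ¬ (inp v ∧ out v)

/-- The vertices `(v, τ)` of the dependence graph `DG(t)` of the circuit `C` with output
port `o`: `(o, 0)` is a vertex, and if `(v, τ)` is a vertex, `u` is the `k`-th
in-neighbor of `v`, and `τ + delay v k ≤ t`, then `(u, τ + delay v k)` is a vertex. -/
inductive DGVert (C : CDCircuit) (o : C.V) (t : ℝ) : C.V → ℝ → Prop
  | root : DGVert C o t o 0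
  | step {v : C.V} {τ : ℝ} {k : ℕ} {u : C.V} :
      DGVert C o t v τ → (C.preds v)[k]? = some u →
      τ + C.delay v k ≤ t → DGVert C o t u (τ + C.delay v k)

/-- Equality of the dependence graphs `DG(t)` and `DG(t')`: they have the same vertices,
and each incoming edge of each vertex lies on the same side of the threshold (so both
graphs also have the same intermediate edges and the same initial-value leaves). -/
def DGEq (C : CDCircuit) (o : C.V) (t t' : ℝ) : Prop :=
  (∀ v τ, DGVert C o t v τ ↔ DGVert C o t' v τ) ∧
  (∀ (v : C.V) (τ : ℝ) (k : ℕ), DGVert C o t v τ → k < (C.preds v).length →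
    (τ + C.delay v k ≤ t ↔ τ + C.delay v k ≤ t'))


/-- Finite sets of possible vertex times: sums of at most `n` delays with indices `< L`. -/
noncomputable def Fset (C : CDCircuit) (L : ℕ) : ℕ → Finset ℝ
  | 0 => {0}
  | n + 1 => Fset C L n ∪
      ((Fset C L n ×ˢ ((@Finset.univ C.V C.instFintype) ×ˢ Finset.range L)).image
        fun p => p.1 + C.delay p.2.1 p.2.2)

theorem Fset_mono (C : CDCircuit) (L : ℕ) : Monotone (Fset C L) := by
  apply monotone_nat_of_le_succ
  intro n
  exact Finset.subset_union_left

theorem Fset_step (C : CDCircuit) (L : ℕ) {n : ℕ} {τ : ℝ} (hτ : τ ∈ Fset C L n)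
    (v : C.V) {k : ℕ} (hk : k < L) : τ + C.delay v k ∈ Fset C L (n + 1) := by
  apply Finset.mem_union_right
  apply Finset.mem_image.2
  refine ⟨(τ, v, k), ?_, rfl⟩
  simp only [Finset.mem_product]
  exact ⟨hτ, @Finset.mem_univ _ C.instFintype v, Finset.mem_range.2 hk⟩

/-- for a circuit with constant-delay channels, a single input port `i`
and a single output port `o`, for every time `t` there is an `ε > 0` with
`DG(t) = DG(t + ε')` for all `0 ≤ ε' ≤ ε`. -/
theorem dependence_graph_locally_constant
    (C : CDCircuit) (i o : C.V)
    (hi : C.inp i) (hiu : ∀ v, C.inp v → v = i)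
    (ho : C.out o) (hou : ∀ v, C.out v → v = o) :
    ∀ t : ℝ, ∃ ε : ℝ, 0 < ε ∧ ∀ ε' : ℝ, 0 ≤ ε' → ε' ≤ ε → DGEq C o t (t + ε') := by
  classical
  haveI := C.instFintype
  intro t
  set L : ℕ := Finset.univ.sup fun v : C.V => (C.preds v).length with hLdef
  have hLge : ∀ v : C.V, (C.preds v).length ≤ L := fun v =>
    Finset.le_sup (f := fun v : C.V => (C.preds v).length) (Finset.mem_univ v)
  set Dset : Finset ℝ :=
    insert (1 : ℝ) ((Finset.univ ×ˢ Finset.range L).image fun p : C.V × ℕ => C.delay p.1 p.2)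
    with hDdef
  have hDne : Dset.Nonempty := ⟨1, Finset.mem_insert_self _ _⟩
  set δ : ℝ := Dset.min' hDne with hδdef
  have hδpos : 0 < δ := by
    apply (Finset.lt_min'_iff _ _).2
    intro b hb
    rcases Finset.mem_insert.1 hb with h | h
    · simp [h]
    · obtain ⟨p, -, rfl⟩ := Finset.mem_image.1 h
      exact C.delay_pos p.1 p.2
  have hδle : ∀ (v : C.V) (k : ℕ), k < L → δ ≤ C.delay v k := by
    intro v k hk
    apply Finset.min'_le
    apply Finset.mem_insert_of_mem
    exact Finset.mem_image.2 ⟨(v, k), Finset.mem_product.2 ⟨Finset.mem_univ v,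
      Finset.mem_range.2 hk⟩, rfl⟩
  obtain ⟨N, hN⟩ := exists_nat_gt ((t + 1) / δ)
  have hNδ : t + 1 < δ * N := by
    rw [div_lt_iff₀ hδpos] at hN; linarith
  -- every vertex time of any DG(t') lies in Fset, with a depth bound
  have key : ∀ (t' : ℝ) (v : C.V) (τ : ℝ), DGVert C o t' v τ →
      ∃ n : ℕ, δ * n ≤ τ ∧ τ ∈ Fset C L n := by
    intro t' v τ h
    induction h with
    | root => exact ⟨0, by simp, by simp [Fset]⟩
    | @step v τ k u h hk hle ih =>
      obtain ⟨n, hn1, hn2⟩ := ih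
      have hklen : k < (C.preds v).length := by
        have := List.getElem?_eq_some_iff.1 hk
        exact this.1
      have hkL : k < L := lt_of_lt_of_le hklen (hLge v)
      refine ⟨n + 1, ?_, Fset_step C L hn2 v hkL⟩
      have := hδle v k hkL
      push_cast
      nlinarith
  have memN : ∀ (t' : ℝ) (v : C.V) (τ : ℝ), DGVert C o t' v τ → τ ≤ t + 1 →
      τ ∈ Fset C L N := by
    intro t' v τ h hτ
    obtain ⟨n, hn1, hn2⟩ := key t' v τ h
    have hnN : n ≤ N := by
      by_contra hcon
      push_neg at hcon
      have : (N : ℝ) ≤ (n : ℝ) := by exact_mod_cast hcon.le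
      nlinarith
    exact Fset_mono C L hnN hn2
  -- choose ε
  set Gt : Finset ℝ := insert (t + 2) ((Fset C L (N + 1)).filter fun s => t < s) with hGdef
  have hGne : Gt.Nonempty := ⟨t + 2, Finset.mem_insert_self _ _⟩
  set ε : ℝ := (Gt.min' hGne - t) / 2 with hεdef
  have hmin_gt : t < Gt.min' hGne := by
    apply (Finset.lt_min'_iff _ _).2
    intro b hb
    rcases Finset.mem_insert.1 hb with h | h
    · rw [h]; linarith
    · exact (Finset.mem_filter.1 h).2
  have hεpos : 0 < ε := by rw [hεdef]; linarith
  have hεle1 : ε ≤ 1 := by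
    have : Gt.min' hGne ≤ t + 2 := Finset.min'_le _ _ (Finset.mem_insert_self _ _)
    rw [hεdef]; linarith
  have hsep : ∀ s ∈ Fset C L (N + 1), s ≤ t + ε → s ≤ t := by
    intro s hs hsle
    by_contra hcon
    push_neg at hcon
    have hmem : s ∈ Gt := Finset.mem_insert_of_mem (Finset.mem_filter.2 ⟨hs, hcon⟩)
    have := Finset.min'_le _ _ hmem
    rw [hεdef] at hsle
    linarith
  refine ⟨ε, hεpos, ?_⟩
  intro ε' h0 hε'
  have hε'1 : ε' ≤ 1 := le_trans hε' hεle1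
  -- forward direction: vertices of DG(t) are vertices of DG(t+ε')
  have fwd : ∀ (v : C.V) (τ : ℝ), DGVert C o t v τ → DGVert C o (t + ε') v τ := by
    intro v τ h
    induction h with
    | root => exact DGVert.root
    | step h hk hle ih => exact DGVert.step ih hk (by linarith)
  -- backward direction
  have bwd : ∀ (v : C.V) (τ : ℝ), DGVert C o (t + ε') v τ → DGVert C o t v τ := by
    intro v τ h
    induction h with
    | root => exact DGVert.root
    | @step v τ k u h hk hle ih =>
      have hklen : k < (C.preds v).length := (List.getElem?_eq_some_iff.1 hk).1
      have hkL : k < L := lt_of_lt_of_le hklen (hLge v)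
      have hdpos := C.delay_pos v k
      have hτN : τ ∈ Fset C L N := memN _ _ _ h (by linarith)
      have hsG : τ + C.delay v k ∈ Fset C L (N + 1) := Fset_step C L hτN v hkL
      have hst : τ + C.delay v k ≤ t := hsep _ hsG (by linarith)
      exact DGVert.step ih hk hst
  refine ⟨fun v τ => ⟨fwd v τ, bwd v τ⟩, ?_⟩
  intro v τ k hv hklen
  have hkL : k < L := lt_of_lt_of_le hklen (hLge v)
  have hdpos := C.delay_pos v k
  constructor
  · intro h; linarith
  · intro h
    have hτN : τ ∈ Fset C L N := memN _ _ _ hv (by linarith)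
    have hsG : τ + C.delay v k ∈ Fset C L (N + 1) := Fset_step C L hτN v hkL
    exact hsep _ hsG (by linarith)
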